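/- Let n ≥ 26 be an integer. For each integer a with 6 ≤ a ≤ ⌊(n+4)/5⌋ and n − a ≡ 0 (mod 2), and each integer b with 4 ≤ b ≤ a − 2, the integer (a choose 2) − b = a(a−1)/2 − b is an eigenvalue of the transposition graph Cay(S_n, T_n). -/

import Mathlib

open Classical in
/-- The adjacency matrix of the transposition graph `Cay(S_n, T_n)`: vertices are the
permutations of `{1, ..., n}` (modelled as `Equiv.Perm (Fin n)`), and distinct `f, g`
are adjacent iff `f * g⁻¹` is a transposition. -/
noncomputable def transpositionGraphAdjMatrix (n : ℕ) :
    Matrix (Equiv.Perm (Fin n)) (Equiv.Perm (Fin n)) ℝ :=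
  fun f g => if f ≠ g ∧ (f * g⁻¹).IsSwap then 1 else 0

/-- An integer `m` is an eigenvalue of the transposition graph `Cay(S_n, T_n)` if it is an
eigenvalue of its adjacency matrix viewed as a matrix over `ℝ`. -/
def IsTranspositionGraphEigenvalue (n : ℕ) (m : ℤ) : Prop :=
  ∃ v : Equiv.Perm (Fin n) → ℝ, v ≠ 0 ∧
    (transpositionGraphAdjMatrix n).mulVec v = (m : ℝ) • v

/-!
Fill a Young diagram `μ` with `n` cells bijectively by `Fin n`; this gives a tableau with row
group `R` and column group `C`. Let `e g` be the coefficient of `g` in the Young symmetrizer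
`(∑_{p ∈ R} p) (∑_{q ∈ C} sgn q • q)`. By von Neumann's lemma every `φ` with
`φ (p * g * q) = sgn q * φ g` is a multiple of `e`: either `g ∈ R * C`, or some transposition
`t ∈ R` has `g⁻¹ * t * g ∈ C`, and then `φ g = -φ g`. The adjacency operator is left
multiplication by the sum of all transpositions, a conjugation-invariant element, so it keeps this
equivariance; hence `e` is an eigenvector, with eigenvalue `∑_τ e τ` = (number of transpositions
inside rows) - (number inside columns) = the sum of the contents `j - i` of the cells of `μ`.

The diagram with rows `(4 + y + z, a + 1, A, B, 2^y, 1^z)` has its first row and first column of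
the same length, whose contents cancel, and its content sum is
`C(a, 2) + (A (A - 5) + B (B - 7) + 16 - (y + 2) (y + 3)) / 2`; three choices of `(A, B, y)`,
according to `b = 4`, `b ≥ 6` even and `b` odd, make this `C(a, 2) - b`, and `z` adjusts the
size to `n`.
-/

open Equiv Equiv.Perm Finset
open scoped Classical Matrix

section Symmetrizer

variable {α : Type*}

def fiberPreserving {β : Type*} (f : α → β) : Subgroup (Perm α) where
  carrier := {g | ∀ x, f (g x) = f x}
  mul_mem' {g h} hg hh x := by simp only [Perm.mul_apply, hg (h x), hh x]
  one_mem' _ := rfl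
  inv_mem' {g} hg x := by simpa using (hg (g⁻¹ x)).symm

-- A tableau is an injection `T : α → ℕ × ℕ`; `T x = (i, j)` puts `x` in row `i`, column `j`.
def rowGroup (T : α → ℕ × ℕ) : Subgroup (Perm α) := fiberPreserving fun x => (T x).1

def colGroup (T : α → ℕ × ℕ) : Subgroup (Perm α) := fiberPreserving fun x => (T x).2

theorem disjoint_rowGroup_colGroup {T : α → ℕ × ℕ} (hT : Function.Injective T) :
    Disjoint (rowGroup T) (colGroup T) :=
  Subgroup.disjoint_def.mpr fun hr hc =>
    Equiv.ext fun x => hT (Prod.ext (hr x) (hc x))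

variable [DecidableEq α]

theorem swap_mem_fiberPreserving {β : Type*} {f : α → β} {x y : α} :
    swap x y ∈ fiberPreserving f ↔ f x = f y := by
  refine ⟨fun h => by simpa using (h x).symm, fun h z => ?_⟩
  rcases eq_or_ne z x with rfl | hzx
  · simp [h]
  rcases eq_or_ne z y with rfl | hzy
  · simp [h]
  · rw [swap_apply_of_ne_of_ne hzx hzy]

theorem eq_one_or_eq_swap_of_forall_apply_eq {x y : α} (hxy : x ≠ y) {q : Perm α}
    (h : ∀ z, z ≠ x → z ≠ y → q z = z) : q = 1 ∨ q = swap x y := by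
  have hqx : q x = x ∨ q x = y := by
    by_contra! hc
    exact hc.1 (q.injective (h _ hc.1 hc.2))
  rcases hqx with hqx | hqx
  · have hqy : q y = y := by
      by_contra hc
      have hx : q y ≠ x := fun hq => hxy (q.injective (hqx.trans hq.symm))
      exact hc (q.injective (h _ hx hc))
    left
    ext z
    by_cases hzx : z = x <;> by_cases hzy : z = y <;> simp_all
  · have hqy : q y = x := by
      by_contra hc
      have hy : q y ≠ y := fun hq => hxy (q.injective (hqx.trans hq.symm))
      exact hy (q.injective (h _ hc hy))
    right
    ext z
    by_cases hzx : z = x <;> by_cases hzy : z = y <;> simp_all [swap_apply_of_ne_of_ne]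

variable [Fintype α]

theorem isSwap_conj_iff {σ τ : Perm α} : (σ * τ * σ⁻¹).IsSwap ↔ τ.IsSwap := by
  rw [isSwap_iff_cycleType, cycleType_conj, ← isSwap_iff_cycleType]

theorem isSwap_inv_iff {τ : Perm α} : τ⁻¹.IsSwap ↔ τ.IsSwap := by
  rw [isSwap_iff_cycleType, cycleType_inv, ← isSwap_iff_cycleType]

variable (R C : Subgroup (Perm α))

noncomputable def youngCoeff (g : Perm α) : ℝ :=
  ∑ q ∈ univ.filter (fun q => q ∈ C ∧ g * q⁻¹ ∈ R), ((sign q : ℤ) : ℝ)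

def IsSignEquivariant (φ : Perm α → ℝ) : Prop :=
  ∀ p ∈ R, ∀ q ∈ C, ∀ g, φ (p * g * q) = (sign q : ℤ) * φ g

theorem isSignEquivariant_youngCoeff : IsSignEquivariant R C (youngCoeff R C) := by
  intro p hp q₀ hq₀ g
  simp only [youngCoeff, sum_filter, mul_sum]
  refine (Fintype.sum_equiv (Equiv.mulRight q₀) _ _ fun q => ?_).symm
  have hC : q * q₀ ∈ C ↔ q ∈ C := C.mul_mem_cancel_right hq₀
  have hR : p * g * q₀ * (q * q₀)⁻¹ ∈ R ↔ g * q⁻¹ ∈ R := by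
    rw [show p * g * q₀ * (q * q₀)⁻¹ = p * (g * q⁻¹) by group, R.mul_mem_cancel_left hp]
  simp only [coe_mulRight, hC, hR, map_mul, Units.val_mul, Int.cast_mul]
  split_ifs <;> ring

variable {R C}

theorem IsSignEquivariant.eq_zero {φ : Perm α → ℝ} (hφ : IsSignEquivariant R C φ)
    {g t : Perm α} (ht : t.IsSwap) (htR : t ∈ R) (htC : g⁻¹ * t * g ∈ C) : φ g = 0 := by
  have hsign : sign (g⁻¹ * t * g) = -1 := by
    apply IsSwap.sign_eq
    simpa using (isSwap_conj_iff (σ := g⁻¹)).mpr ht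
  have htt : t * t = 1 := by obtain ⟨x, y, -, rfl⟩ := ht; exact swap_mul_self x y
  have h := hφ t htR _ htC g
  rw [show t * g * (g⁻¹ * t * g) = g by simp [← mul_assoc, htt], hsign] at h
  push_cast at h
  linarith

theorem youngCoeff_one (hRC : Disjoint R C) : youngCoeff R C 1 = 1 := by
  have : univ.filter (fun q : Perm α => q ∈ C ∧ 1 * q⁻¹ ∈ R) = {1} := by
    ext q
    simp only [mem_filter, mem_univ, true_and, one_mul, inv_mem_iff, mem_singleton]
    exact ⟨fun h => Subgroup.disjoint_def.mp hRC h.2 h.1, fun h => h ▸ ⟨C.one_mem, R.one_mem⟩⟩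
  rw [youngCoeff, this, sum_singleton]
  simp

theorem IsSignEquivariant.eq_smul_youngCoeff {φ : Perm α → ℝ} (hφ : IsSignEquivariant R C φ)
    (hRC : Disjoint R C)
    (hdich : ∀ g : Perm α,
      (∃ t, t.IsSwap ∧ t ∈ R ∧ g⁻¹ * t * g ∈ C) ∨ ∃ p ∈ R, ∃ q ∈ C, p * q = g) :
    φ = φ 1 • youngCoeff R C := by
  funext g
  rcases hdich g with ⟨t, ht, htR, htC⟩ | ⟨p, hp, q, hq, rfl⟩
  · simp [hφ.eq_zero ht htR htC, (isSignEquivariant_youngCoeff R C).eq_zero ht htR htC]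
  · have h₁ := hφ p hp q hq 1
    have h₂ := isSignEquivariant_youngCoeff R C p hp q hq 1
    simp only [mul_one] at h₁ h₂
    rw [Pi.smul_apply, h₁, h₂, youngCoeff_one hRC, smul_eq_mul]
    ring

def rowDefect (T : α → ℕ × ℕ) (φ : Perm α) : Finset α :=
  univ.filter fun x => (T (φ x)).1 ≠ (T x).1

omit [DecidableEq α] in
theorem exists_row_lt_of_rowDefect_nonempty {T : α → ℕ × ℕ} {φ : Perm α}
    (h : (rowDefect T φ).Nonempty) : ∃ x, (T x).1 < (T (φ x)).1 := by
  by_contra! hle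
  obtain ⟨x, hx⟩ := h
  have hsum : ∑ x, (T (φ x)).1 = ∑ x, (T x).1 := Equiv.sum_comp φ fun x => (T x).1
  rw [sum_eq_sum_iff_of_le fun x _ => hle x] at hsum
  exact (mem_filter.mp hx).2 (hsum x (mem_univ x))

/-- Swapping `φ x₀` with the cell of its column lying in the row of `x₀` repairs `x₀`; the only
other point it moves is sent by `φ` into the row of `x₀`, so by `hφ` it was already defective. -/
theorem exists_rowDefect_swap_mul_ssubset {T : α → ℕ × ℕ} (hT : IsLowerSet (Set.range T))
    {φ : Perm α} (hφ : ∀ x y, x ≠ y → (T x).1 = (T y).1 → (T (φ x)).2 ≠ (T (φ y)).2)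
    {x₀ : α} (hx₀ : (T x₀).1 < (T (φ x₀)).1) :
    ∃ s ∈ colGroup T, rowDefect T (s * φ) ⊂ rowDefect T φ := by
  obtain ⟨z, hz⟩ : ((T x₀).1, (T (φ x₀)).2) ∈ Set.range T :=
    hT (show ((T x₀).1, (T (φ x₀)).2) ≤ T (φ x₀) from ⟨hx₀.le, le_rfl⟩) ⟨φ x₀, rfl⟩
  refine ⟨swap (φ x₀) z, swap_mem_fiberPreserving.mpr (by rw [hz]), ?_⟩
  have hx₀mem : x₀ ∈ rowDefect T φ := mem_filter.mpr ⟨mem_univ _, hx₀.ne'⟩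
  refine Finset.ssubset_of_subset_of_ssubset (fun x hx => ?_) (erase_ssubset hx₀mem)
  have hx : (T (swap (φ x₀) z (φ x))).1 ≠ (T x).1 := (mem_filter.mp hx).2
  rw [mem_erase, rowDefect, mem_filter]
  rcases eq_or_ne x x₀ with rfl | hxx₀
  · simp [hz] at hx
  have hφx : φ x ≠ φ x₀ := fun h => hxx₀ (φ.injective h)
  rcases eq_or_ne (φ x) z with hφz | hφz
  · refine ⟨hxx₀, mem_univ _, fun hrow => hφ x x₀ hxx₀ ?_ (by rw [hφz, hz])⟩
    rw [← hrow, hφz, hz]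
  · rw [swap_apply_of_ne_of_ne hφx hφz] at hx
    exact ⟨hxx₀, mem_univ _, hx⟩

theorem exists_mem_colGroup_mul_mem_rowGroup {T : α → ℕ × ℕ} (hT : IsLowerSet (Set.range T))
    (φ : Perm α) (hφ : ∀ x y, x ≠ y → (T x).1 = (T y).1 → (T (φ x)).2 ≠ (T (φ y)).2) :
    ∃ q ∈ colGroup T, q * φ ∈ rowGroup T := by
  induction hk : #(rowDefect T φ) using Nat.strong_induction_on generalizing φ with
  | _ k ih =>
  rcases (rowDefect T φ).eq_empty_or_nonempty with h | h
  · refine ⟨1, (colGroup T).one_mem, fun x => ?_⟩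
    by_contra hx
    exact (eq_empty_iff_forall_notMem.mp h) x (mem_filter.mpr ⟨mem_univ x, hx⟩)
  obtain ⟨x₀, hx₀⟩ := exists_row_lt_of_rowDefect_nonempty h
  obtain ⟨s, hs, hlt⟩ := exists_rowDefect_swap_mul_ssubset hT hφ hx₀
  have hsφ : ∀ x y, x ≠ y → (T x).1 = (T y).1 → (T ((s * φ) x)).2 ≠ (T ((s * φ) y)).2 :=
    fun x y hxy hrow => by simpa [hs (φ x), hs (φ y)] using hφ x y hxy hrow
  obtain ⟨q, hq, hqsφ⟩ := ih _ (hk ▸ card_lt_card hlt) (s * φ) hsφ rfl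
  exact ⟨q * s, mul_mem hq hs, by rwa [mul_assoc]⟩

theorem swap_conj_mem_or_mem_mul {T : α → ℕ × ℕ} (hT : IsLowerSet (Set.range T)) (g : Perm α) :
    (∃ t, t.IsSwap ∧ t ∈ rowGroup T ∧ g⁻¹ * t * g ∈ colGroup T) ∨
      ∃ p ∈ rowGroup T, ∃ q ∈ colGroup T, p * q = g := by
  by_cases h : ∃ x y, x ≠ y ∧ (T x).1 = (T y).1 ∧ (T (g⁻¹ x)).2 = (T (g⁻¹ y)).2
  · obtain ⟨x, y, hxy, hrow, hcol⟩ := h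
    refine Or.inl ⟨swap x y, ⟨x, y, hxy, rfl⟩, swap_mem_fiberPreserving.mpr hrow, ?_⟩
    rw [show g⁻¹ * swap x y * g = swap (g⁻¹ x) (g⁻¹ y) by rw [swap_apply_apply, inv_inv]]
    exact swap_mem_fiberPreserving.mpr hcol
  · push Not at h
    obtain ⟨q, hq, hqg⟩ := exists_mem_colGroup_mul_mem_rowGroup hT g⁻¹ h
    exact Or.inr ⟨(q * g⁻¹)⁻¹, inv_mem hqg, q, hq, by group⟩

theorem youngCoeff_swap {T : α → ℕ × ℕ} (hT : Function.Injective T) {τ : Perm α}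
    (hτ : τ.IsSwap) :
    youngCoeff (rowGroup T) (colGroup T) τ =
      (if τ ∈ rowGroup T then 1 else 0) - (if τ ∈ colGroup T then 1 else 0) := by
  obtain ⟨x, y, hxy, rfl⟩ := hτ
  have hsupp : ∀ q, q ∈ colGroup T ∧ swap x y * q⁻¹ ∈ rowGroup T →
      q ∈ ({1, swap x y} : Finset (Perm α)) := by
    rintro q ⟨hqC, hqR⟩
    rw [mem_insert, mem_singleton]
    refine eq_one_or_eq_swap_of_forall_apply_eq hxy fun z hzx hzy => hT (Prod.ext ?_ (hqC z))
    simpa [swap_apply_of_ne_of_ne hzx hzy] using (hqR (q z)).symm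
  have hne : (1 : Perm α) ≠ swap x y := fun h => hxy (swap_eq_one_iff.mp h.symm)
  rw [youngCoeff, sum_filter,
    ← sum_subset (subset_univ _) fun q _ hq => if_neg fun hP => hq (hsupp q hP),
    sum_pair hne]
  simp only [one_mem, inv_one, mul_one, true_and, Perm.sign_one, Units.val_one, Int.cast_one,
    swap_inv, swap_mul_self, and_true, sign_swap hxy, Units.val_neg, Int.reduceNeg, Int.cast_neg]
  split_ifs <;> ring

theorem card_isSwap_mem_fiberPreserving {f g : α → ℕ}
    (hfg : Function.Injective fun x => (f x, g x)) (hg : ∀ x, ∀ j < g x, ∃ y, f y = f x ∧ g y = j) :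
    #(univ.filter fun τ : Perm α => τ.IsSwap ∧ τ ∈ fiberPreserving f) = ∑ x, g x := by
  have hpairs : #(univ.filter fun p : α × α => f p.1 = f p.2 ∧ g p.2 < g p.1) =
      #(univ.filter fun τ : Perm α => τ.IsSwap ∧ τ ∈ fiberPreserving f) := by
    refine card_bij (fun p _ => swap p.1 p.2) ?_ ?_ ?_
    · rintro ⟨x, y⟩ hp
      obtain ⟨hf, hlt⟩ := (mem_filter.mp hp).2
      exact mem_filter.mpr ⟨mem_univ _, ⟨x, y, fun h => by simp [h] at hlt, rfl⟩,
        swap_mem_fiberPreserving.mpr hf⟩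
    · rintro ⟨x, y⟩ hp ⟨x', y'⟩ hp' h
      have hlt := (mem_filter.mp hp).2.2
      have hlt' := (mem_filter.mp hp').2.2
      have hx : swap x' y' x = y := by simpa using (congrArg (· x) h).symm
      simp only at h hlt hlt' ⊢
      rcases eq_or_ne x x' with rfl | hxx'
      · simp_all
      rcases eq_or_ne x y' with rfl | hxy'
      · simp only [swap_apply_right] at hx; subst hx; omega
      · rw [swap_apply_of_ne_of_ne hxx' hxy'] at hx; subst hx; omega
    · intro τ hτ
      obtain ⟨⟨x, y, hxy, rfl⟩, hmem⟩ := (mem_filter.mp hτ).2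
      have hf : f x = f y := swap_mem_fiberPreserving.mp hmem
      have hgxy : g x ≠ g y := fun h => hxy (hfg (Prod.ext hf h))
      rcases hgxy.lt_or_gt with hlt | hlt
      · exact ⟨(y, x), mem_filter.mpr ⟨mem_univ _, hf.symm, hlt⟩, swap_comm y x⟩
      · exact ⟨(x, y), mem_filter.mpr ⟨mem_univ _, hf, hlt⟩, rfl⟩
  have hrow : ∀ x, #(univ.filter fun y => f x = f y ∧ g y < g x) = g x := by
    intro x
    refine Eq.trans ?_ (card_range (g x))
    refine card_bij (fun y _ => g y) (fun y hy => mem_range.mpr (mem_filter.mp hy).2.2) ?_ ?_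
    · intro y hy y' hy' h
      exact hfg (Prod.ext ((mem_filter.mp hy).2.1.symm.trans (mem_filter.mp hy').2.1) h)
    · intro j hj
      obtain ⟨y, hfy, rfl⟩ := hg x j (mem_range.mp hj)
      exact ⟨y, mem_filter.mpr ⟨mem_univ _, hfy.symm, (mem_range.mp hj)⟩, rfl⟩
  rw [← hpairs, card_filter, Fintype.sum_prod_type]
  exact sum_congr rfl fun x _ => by rw [← hrow x, card_filter]

theorem sum_youngCoeff_isSwap {T : α → ℕ × ℕ} (hT : Function.Injective T)
    (hT' : IsLowerSet (Set.range T)) :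
    ∑ τ ∈ univ.filter IsSwap, youngCoeff (rowGroup T) (colGroup T) τ =
      ∑ x, (((T x).2 : ℝ) - (T x).1) := by
  have hrow : ∀ x, ∀ j < (T x).2, ∃ y, (T y).1 = (T x).1 ∧ (T y).2 = j := fun x j hj => by
    obtain ⟨y, hy⟩ := hT' (show ((T x).1, j) ≤ T x from ⟨le_rfl, hj.le⟩) ⟨x, rfl⟩
    exact ⟨y, by simp [hy]⟩
  have hcol : ∀ x, ∀ i < (T x).1, ∃ y, (T y).2 = (T x).2 ∧ (T y).1 = i := fun x i hi => by
    obtain ⟨y, hy⟩ := hT' (show (i, (T x).2) ≤ T x from ⟨hi.le, le_rfl⟩) ⟨x, rfl⟩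
    exact ⟨y, by simp [hy]⟩
  rw [sum_congr rfl fun τ hτ => youngCoeff_swap hT (mem_filter.mp hτ).2, sum_sub_distrib,
    sum_boole, sum_boole, filter_filter, filter_filter, rowGroup, colGroup,
    card_isSwap_mem_fiberPreserving (f := fun x => (T x).1) hT hrow,
    card_isSwap_mem_fiberPreserving (f := fun x => (T x).2)
      (fun x y h => hT (Prod.ext (congrArg Prod.snd h) (congrArg Prod.fst h))) hcol,
    sum_sub_distrib]
  push_cast
  rfl

end Symmetrizer

section TranspositionGraph

variable {n : ℕ}

theorem transpositionGraphAdjMatrix_mulVec_apply (v : Perm (Fin n) → ℝ) (g : Perm (Fin n)) :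
    (transpositionGraphAdjMatrix n *ᵥ v) g = ∑ τ ∈ univ.filter IsSwap, v (τ * g) := by
  rw [sum_filter]
  refine (Fintype.sum_equiv (Equiv.mulRight g) _ _ fun τ => ?_).symm
  by_cases hτ : τ.IsSwap
  · have hne : g ≠ τ * g := by
      obtain ⟨x, y, hxy, rfl⟩ := hτ
      simpa [eq_comm (a := g), swap_eq_one_iff] using hxy
    simp [transpositionGraphAdjMatrix, hτ, hne, isSwap_inv_iff]
  · simp [transpositionGraphAdjMatrix, hτ, isSwap_inv_iff]

theorem IsSignEquivariant.mulVec {R C : Subgroup (Perm (Fin n))} {v : Perm (Fin n) → ℝ}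
    (hv : IsSignEquivariant R C v) :
    IsSignEquivariant R C (transpositionGraphAdjMatrix n *ᵥ v) := by
  intro p hp q hq g
  simp only [transpositionGraphAdjMatrix_mulVec_apply, mul_sum]
  refine sum_equiv (MulAut.conj p⁻¹).toEquiv (fun τ => ?_) (fun τ _ => ?_)
  · simpa using (isSwap_conj_iff (σ := p⁻¹) (τ := τ)).symm
  · rw [show τ * (p * g * q) = p * (p⁻¹ * τ * p * g) * q by group, hv p hp q hq]
    simp

theorem isTranspositionGraphEigenvalue_of_tableau {T : Fin n → ℕ × ℕ}
    (hT : Function.Injective T) (hT' : IsLowerSet (Set.range T)) :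
    IsTranspositionGraphEigenvalue n (∑ x, ((T x).2 - (T x).1 : ℤ)) := by
  have hRC := disjoint_rowGroup_colGroup hT
  have he := isSignEquivariant_youngCoeff (rowGroup T) (colGroup T)
  refine ⟨youngCoeff (rowGroup T) (colGroup T),
    fun h => one_ne_zero ((youngCoeff_one hRC).symm.trans (congrFun h 1)), ?_⟩
  rw [he.mulVec.eq_smul_youngCoeff hRC (swap_conj_mem_or_mem_mul hT'),
    transpositionGraphAdjMatrix_mulVec_apply]
  simp only [mul_one, sum_youngCoeff_isSwap hT hT']
  push_cast
  rfl

end TranspositionGraph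

def YoungDiagram.contentSum (μ : YoungDiagram) : ℤ := ∑ c ∈ μ.cells, ((c.2 : ℤ) - c.1)

theorem isTranspositionGraphEigenvalue_contentSum {n : ℕ} (μ : YoungDiagram) (hμ : μ.card = n) :
    IsTranspositionGraphEigenvalue n μ.contentSum := by
  let E : Fin n ≃ μ.cells := (Fintype.equivFinOfCardEq (by simpa using hμ)).symm
  have hrange : Set.range (fun x => (E x).1) = μ.cells := by
    ext c
    exact ⟨fun ⟨x, hx⟩ => hx ▸ (E x).2, fun hc => ⟨E.symm ⟨c, hc⟩, by simp⟩⟩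
  have h := isTranspositionGraphEigenvalue_of_tableau (T := fun x => (E x).1)
    (Subtype.val_injective.comp E.injective) (hrange ▸ μ.isLowerSet)
  rwa [YoungDiagram.contentSum, ← sum_coe_sort, ← E.sum_comp]

theorem two_mul_sum_range_sub (w r : ℕ) :
    2 * ∑ j ∈ range w, ((j : ℤ) - r) = w * (w - 1) - 2 * r * w := by
  induction w with
  | zero => simp
  | succ w ih => rw [sum_range_succ, mul_add, ih]; push_cast; ring

namespace YoungDiagram

def ofWidths (w : ℕ → ℕ) (hw : Antitone w) (R : ℕ) : YoungDiagram where
  cells := (range R ×ˢ range (w 0)).filter fun c => c.2 < w c.1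
  isLowerSet c d hdc hc := by
    simp only [coe_filter, mem_product, mem_range, Set.mem_ofPred_eq] at hc ⊢
    have := hdc.1
    have := hw hdc.1
    have := hw (Nat.zero_le d.1)
    have := hdc.2
    omega

variable {w : ℕ → ℕ} (hw : Antitone w) (R : ℕ)

theorem sum_cells_ofWidths {M : Type*} [AddCommMonoid M] (g : ℕ × ℕ → M) :
    ∑ c ∈ (ofWidths w hw R).cells, g c = ∑ r ∈ range R, ∑ j ∈ range (w r), g (r, j) := by
  rw [ofWidths, sum_filter, sum_product]
  refine sum_congr rfl fun r _ => ?_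
  rw [← sum_filter]
  congr 1
  ext j
  have := hw (Nat.zero_le r)
  simp only [mem_filter, mem_range]
  omega

theorem card_ofWidths : (ofWidths w hw R).card = ∑ r ∈ range R, w r := by
  rw [YoungDiagram.card, card_eq_sum_ones, sum_cells_ofWidths]
  simp

theorem two_mul_contentSum_ofWidths :
    2 * (ofWidths w hw R).contentSum = ∑ r ∈ range R, ((w r : ℤ) * (w r - 1) - 2 * r * w r) := by
  rw [contentSum, sum_cells_ofWidths, mul_sum]
  exact sum_congr rfl fun r _ => two_mul_sum_range_sub (w r) r

end YoungDiagram

theorem sum_range_four_add_add {M : Type*} [AddCommMonoid M] (G : ℕ → M) (y z : ℕ) :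
    ∑ r ∈ range (4 + y + z), G r =
      G 0 + G 1 + G 2 + G 3 + ∑ i ∈ range y, G (4 + i) + ∑ i ∈ range z, G (4 + y + i) := by
  simp [sum_range_add, sum_range_succ]

theorem exists_youngDiagram_two_mul_contentSum (a A B y z : ℕ) (hB : 2 ≤ B) (hBA : B ≤ A)
    (hA : A ≤ a + 1) (ha : a + 1 ≤ 4 + y + z) :
    ∃ μ : YoungDiagram, μ.card = a + A + B + 3 * y + 2 * z + 5 ∧
      2 * μ.contentSum = a * (a - 1) + A * (A - 5) + B * (B - 7) + 16 - (y + 2) * (y + 3) := by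
  let w : ℕ → ℕ := fun r =>
    if r = 0 then 4 + y + z else if r = 1 then a + 1 else if r = 2 then A else if r = 3 then B
    else if r < 4 + y then 2 else 1
  have hw : Antitone w := fun r s hrs => by
    dsimp only [w]
    split_ifs <;> omega
  have hmid : ∀ i ∈ range y, w (4 + i) = 2 := fun i hi => by
    simp only [w, mem_range] at hi ⊢
    split_ifs <;> omega
  have htail : ∀ i ∈ range z, w (4 + y + i) = 1 := fun i _ => by
    simp only [w]
    split_ifs <;> omega
  refine ⟨YoungDiagram.ofWidths w hw (4 + y + z), ?_, ?_⟩
  · rw [YoungDiagram.card_ofWidths, sum_range_four_add_add, sum_congr rfl hmid,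
      sum_congr rfl htail]
    simp only [w, ↓reduceIte, one_ne_zero, OfNat.ofNat_ne_zero, OfNat.ofNat_ne_one,
      Nat.succ_ne_self, sum_const, card_range, smul_eq_mul, mul_one]
    ring
  · have hmid' : ∀ i ∈ range y, ((w (4 + i) : ℤ) * (w (4 + i) - 1) -
        2 * ((4 + i : ℕ) : ℤ) * w (4 + i)) = -14 - 4 * i := fun i hi => by
      rw [hmid i hi]; push_cast; ring
    have htail' : ∀ i ∈ range z, ((w (4 + y + i) : ℤ) * (w (4 + y + i) - 1) -
        2 * ((4 + y + i : ℕ) : ℤ) * w (4 + y + i)) = -8 - 2 * y - 2 * i := fun i hi => by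
      rw [htail i hi]; push_cast; ring
    rw [YoungDiagram.two_mul_contentSum_ofWidths, sum_range_four_add_add, sum_congr rfl hmid',
      sum_congr rfl htail']
    simp only [sum_sub_distrib, sum_const, card_range, ← mul_sum, nsmul_eq_mul]
    simp only [w, ↓reduceIte, Nat.cast_add, Nat.cast_ofNat, CharP.cast_eq_zero, mul_zero, zero_mul,
      sub_zero, one_ne_zero, Nat.cast_one, add_sub_cancel_right, mul_one, OfNat.ofNat_ne_zero,
      OfNat.ofNat_ne_one, Int.reduceMul, Nat.succ_ne_self, Int.reduceNeg, mul_neg]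
    have hy := two_mul_sum_range_sub y 0
    have hz := two_mul_sum_range_sub z 0
    simp only [Nat.cast_zero, sub_zero, mul_zero, zero_mul] at hy hz
    linear_combination (-2 : ℤ) * hy - hz

theorem two_mul_choose_two (a : ℕ) : 2 * (a.choose 2 : ℤ) = a * (a - 1) := by
  rcases Nat.eq_zero_or_pos a with rfl | ha
  · simp
  have h := Nat.div_mul_cancel (Nat.even_mul_pred_self a).two_dvd
  rw [← Nat.choose_two_right] at h
  zify [ha] at h
  linarith

theorem stmt15_general (n a b : ℕ) (ha2 : a ≤ (n + 4) / 5)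
    (hpar : (n - a) % 2 = 0) (hb1 : 4 ≤ b) (hb2 : b ≤ a - 2) :
    IsTranspositionGraphEigenvalue n (((a.choose 2 : ℕ) : ℤ) - b) := by
  obtain ⟨μ, hcard, hcontent⟩ :
      ∃ μ : YoungDiagram, μ.card = n ∧ 2 * μ.contentSum = a * (a - 1) - 2 * b := by
    rcases Nat.even_or_odd' b with ⟨d, rfl | rfl⟩
    · rcases (show 2 ≤ d by omega).eq_or_lt with rfl | hd
      · obtain ⟨μ, h₁, h₂⟩ := exists_youngDiagram_two_mul_contentSum a 5 3 1 ((n - a - 16) / 2)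
          (by omega) (by omega) (by omega) (by omega)
        exact ⟨μ, by omega, by rw [h₂]; push_cast; ring⟩
      · obtain ⟨e, rfl⟩ : ∃ e, d = e + 3 := ⟨d - 3, by omega⟩
        obtain ⟨μ, h₁, h₂⟩ := exists_youngDiagram_two_mul_contentSum a (e + 4) 4 (e + 1)
          ((n - a - 4 * e - 16) / 2) (by omega) (by omega) (by omega) (by omega)
        exact ⟨μ, by omega, by rw [h₂]; push_cast; ring⟩
    · obtain ⟨e, rfl⟩ : ∃ e, d = e + 2 := ⟨d - 2, by omega⟩
      obtain ⟨μ, h₁, h₂⟩ := exists_youngDiagram_two_mul_contentSum a (e + 4) 2 (e + 1)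
        ((n - a - 4 * e - 14) / 2) (by omega) (by omega) (by omega) (by omega)
      exact ⟨μ, by omega, by rw [h₂]; push_cast; ring⟩
  have hμ : μ.contentSum = (a.choose 2 : ℤ) - b := by linarith [two_mul_choose_two a]
  exact hμ ▸ isTranspositionGraphEigenvalue_contentSum μ hcard

theorem stmt15 (n a b : ℕ) (hn : 26 ≤ n) (ha1 : 6 ≤ a) (ha2 : a ≤ (n + 4) / 5)
    (hpar : (n - a) % 2 = 0) (hb1 : 4 ≤ b) (hb2 : b ≤ a - 2) :
    IsTranspositionGraphEigenvalue n (((a.choose 2 : ℕ) : ℤ) - b) :=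
  stmt15_general n a b ha2 hpar hb1 hb2
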